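/- Let $X$ be a normed space, $\nu : U \to \mathbb{R}$ three times differentiable on a convex open set $U$, $\bar g \in U$ a critical point of $\nu$ ($\nu'_{\bar g} = 0$). Suppose there are constants $C_1, C > 0$ and seminorms $\|\cdot\|_{H^1} \leq \|\cdot\|_{C^{2,\alpha}}$ on $X$ such that $\nu''_{\bar g}(h,h) \leq -C_1 \|h\|_{H^1}^2$ and $|\nu'''_{g}(h,h,h)| \leq C \|h\|_{H^1}^2 \|h\|_{C^{2,\alpha}}$ for all $g$ on the segment from $\bar g$ to $\bar g + h$. Then $\nu(\bar g + h) \leq \nu(\bar g) - (C_1/2 - C\|h\|_{C^{2,\alpha}})\|h\|_{H^1}^2$; in particular $\nu(\bar g + h) \leq \nu(\bar g)$ whenever $\|h\|_{C^{2,\alpha}} \leq C_1/(2C)$. -/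

import Mathlib

/-!
Restrict `ν` to the segment `t ↦ ḡ + t h`. The derivatives of `φ(t) = ν(ḡ + t h)` are the
iterated Fréchet derivatives of `ν` evaluated on the diagonal `(h, …, h)`, so `φ'(0) = 0`,
`φ''(0) ≤ -C₁‖h‖²_{H¹}` and `φ''' ≤ M := C‖h‖²_{H¹}‖h‖_{C^{2,α}}` on `[0, 1]`. Integrating
`φ''' ≤ M` three times from `0` (monotonicity of the successive Taylor remainders) gives
`φ(1) ≤ φ(0) + φ''(0)/2 + M/6`, and `M/6 ≤ M` since `M` bounds an absolute value.
-/

open Set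

theorem hasDerivAt_iteratedFDeriv_apply_line {E F : Type*} [NormedAddCommGroup E]
    [NormedSpace ℝ E] [NormedAddCommGroup F] [NormedSpace ℝ F] {f : E → F} {n : ℕ}
    {N : WithTop ℕ∞} (hf : ContDiff ℝ N f) (hn : (n : WithTop ℕ∞) < N) (x h : E) (t : ℝ) :
    HasDerivAt (fun s : ℝ => iteratedFDeriv ℝ n f (x + s • h) (fun _ => h))
      (iteratedFDeriv ℝ (n + 1) f (x + t • h) (fun _ => h)) t := by
  have hline : HasDerivAt (fun s : ℝ => x + s • h) h t := by
    simpa using ((hasDerivAt_id t).smul_const h).const_add x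
  have hD := ((hf.differentiable_iteratedFDeriv hn) (x + t • h)).hasFDerivAt.comp_hasDerivAt
    t hline
  exact (ContinuousMultilinearMap.apply ℝ (fun _ : Fin n => E) F (fun _ => h)).hasFDerivAt
    |>.comp_hasDerivAt t hD

theorem le_of_deriv_nonpos_unitInterval {g g' : ℝ → ℝ} (hg : ∀ t, HasDerivAt g (g' t) t)
    (hg' : ∀ t ∈ Ioo (0 : ℝ) 1, g' t ≤ 0) {t : ℝ} (ht : t ∈ Icc (0 : ℝ) 1) : g t ≤ g 0 := by
  have hanti : AntitoneOn g (Icc 0 1) := by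
    refine antitoneOn_of_deriv_nonpos (convex_Icc 0 1)
      (fun s _ => (hg s).continuousAt.continuousWithinAt)
      (fun s _ => (hg s).differentiableAt.differentiableWithinAt) fun s hs => ?_
    rw [interior_Icc] at hs
    exact (hg s).deriv ▸ hg' s hs
  exact hanti (left_mem_Icc.mpr zero_le_one) ht ht.1

theorem apply_one_le_of_third_deriv_le {f f₁ f₂ f₃ : ℝ → ℝ} {M : ℝ}
    (hf : ∀ t, HasDerivAt f (f₁ t) t) (hf₁ : ∀ t, HasDerivAt f₁ (f₂ t) t)
    (hf₂ : ∀ t, HasDerivAt f₂ (f₃ t) t) (hf₃ : ∀ t ∈ Icc (0 : ℝ) 1, f₃ t ≤ M) :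
    f 1 ≤ f 0 + f₁ 0 + f₂ 0 / 2 + M / 6 := by
  have hf₂_le : ∀ t ∈ Icc (0 : ℝ) 1, f₂ t ≤ f₂ 0 + t * M := fun t ht => by
    have := le_of_deriv_nonpos_unitInterval (g := fun s => f₂ s - s * M)
      (fun s => (hf₂ s).sub (hasDerivAt_mul_const M))
      (fun s hs => by linarith [hf₃ s (Ioo_subset_Icc_self hs)]) ht
    simp only [zero_mul, sub_zero] at this
    linarith
  have hf₁_le : ∀ t ∈ Icc (0 : ℝ) 1, f₁ t ≤ f₁ 0 + t * f₂ 0 + t ^ 2 / 2 * M := fun t ht => by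
    have := le_of_deriv_nonpos_unitInterval (g := fun s => f₁ s - s * f₂ 0 - s ^ 2 / 2 * M)
      (fun s => ((hf₁ s).sub (hasDerivAt_mul_const _)).sub
        (((hasDerivAt_pow 2 s).div_const 2).mul_const M))
      (fun s hs => by
        have := hf₂_le s (Ioo_subset_Icc_self hs)
        push_cast
        linarith) ht
    linarith
  have := le_of_deriv_nonpos_unitInterval
    (g := fun s => f s - s * f₁ 0 - s ^ 2 / 2 * f₂ 0 - s ^ 3 / 6 * M)
    (fun s => (((hf s).sub (hasDerivAt_mul_const _)).sub
      (((hasDerivAt_pow 2 s).div_const 2).mul_const _)).sub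
      (((hasDerivAt_pow 3 s).div_const 6).mul_const M))
    (fun s hs => by
      have := hf₁_le s (Ioo_subset_Icc_self hs)
      push_cast
      linarith) (right_mem_Icc.mpr zero_le_one)
  norm_num at this
  linarith

theorem stmt16_general {X : Type*} [NormedAddCommGroup X] [NormedSpace ℝ X]
    (ν : X → ℝ) (hν : ContDiff ℝ 3 ν) (g₀ h : X) (C₁ C : ℝ) (hC : 0 < C)
    (N₁ N₂ : X → ℝ)
    (hcrit : fderiv ℝ ν g₀ = 0)
    (hsec : (iteratedFDeriv ℝ 2 ν g₀) ![h, h] ≤ -C₁ * N₁ h ^ 2)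
    (hthird : ∀ t ∈ Set.Icc (0:ℝ) 1,
      |(iteratedFDeriv ℝ 3 ν (g₀ + t • h)) ![h, h, h]| ≤ C * N₁ h ^ 2 * N₂ h) :
    ν (g₀ + h) ≤ ν g₀ - (C₁/2 - C * N₂ h) * N₁ h ^ 2 ∧
    (N₂ h ≤ C₁/(2*C) → ν (g₀ + h) ≤ ν g₀) := by
  set φ : ℕ → ℝ → ℝ := fun k t => iteratedFDeriv ℝ k ν (g₀ + t • h) (fun _ => h)
  have hφ : ∀ k < 3, ∀ t, HasDerivAt (φ k) (φ (k + 1) t) t := fun k hk =>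
    hasDerivAt_iteratedFDeriv_apply_line hν (by exact_mod_cast hk) g₀ h
  have diag2 : ![h, h] = fun _ => h := by ext i; fin_cases i <;> rfl
  have diag3 : ![h, h, h] = fun _ => h := by ext i; fin_cases i <;> rfl
  have hthird' : ∀ t ∈ Icc (0 : ℝ) 1, |φ 3 t| ≤ C * N₁ h ^ 2 * N₂ h := fun t ht => by
    simpa only [φ, diag3] using hthird t ht
  have taylor := apply_one_le_of_third_deriv_le (hφ 0 (by norm_num)) (hφ 1 (by norm_num))
    (hφ 2 (by norm_num)) fun t ht => (le_abs_self _).trans (hthird' t ht)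
  have hM : 0 ≤ C * N₁ h ^ 2 * N₂ h :=
    (abs_nonneg _).trans (hthird' 0 (left_mem_Icc.mpr zero_le_one))
  simp only [φ, zero_add, Nat.reduceAdd, zero_smul, add_zero, one_smul,
    iteratedFDeriv_zero_apply, iteratedFDeriv_one_apply, hcrit, zero_apply, ← diag2] at taylor
  have main : ν (g₀ + h) ≤ ν g₀ - (C₁/2 - C * N₂ h) * N₁ h ^ 2 := by linarith
  refine ⟨main, fun hsmall => ?_⟩
  have hCN₂ : C * N₂ h ≤ C₁ / 2 := by
    rw [le_div_iff₀ (by positivity)] at hsmall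
    linarith
  linarith [mul_nonneg (sub_nonneg.mpr hCN₂) (sq_nonneg (N₁ h))]

/-- Taylor expansion argument for local maximality: if `ν'(ḡ) = 0`,
`ν''_ḡ(h,h) ≤ -C₁‖h‖²_{H¹}` and `|ν'''(h,h,h)| ≤ C‖h‖²_{H¹}‖h‖_{C^{2,α}}` along the
segment, then `ν(ḡ+h) ≤ ν(ḡ) - (C₁/2 - C‖h‖_{C^{2,α}})‖h‖²_{H¹}`; in particular
`ν(ḡ+h) ≤ ν(ḡ)` whenever `‖h‖_{C^{2,α}} ≤ C₁/(2C)`. -/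
theorem stmt16 {X : Type*} [NormedAddCommGroup X] [NormedSpace ℝ X]
    (ν : X → ℝ) (hν : ContDiff ℝ 3 ν) (g₀ h : X) (C₁ C : ℝ) (hC₁ : 0 < C₁) (hC : 0 < C)
    (N₁ N₂ : X → ℝ) (hN₁ : 0 ≤ N₁ h) (hN : ∀ x : X, N₁ x ≤ N₂ x)
    (hcrit : fderiv ℝ ν g₀ = 0)
    (hsec : (iteratedFDeriv ℝ 2 ν g₀) ![h, h] ≤ -C₁ * N₁ h ^ 2)
    (hthird : ∀ t ∈ Set.Icc (0:ℝ) 1,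
      |(iteratedFDeriv ℝ 3 ν (g₀ + t • h)) ![h, h, h]| ≤ C * N₁ h ^ 2 * N₂ h) :
    ν (g₀ + h) ≤ ν g₀ - (C₁/2 - C * N₂ h) * N₁ h ^ 2 ∧
    (N₂ h ≤ C₁/(2*C) → ν (g₀ + h) ≤ ν g₀) :=
  stmt16_general ν hν g₀ h C₁ C hC N₁ N₂ hcrit hsec hthird
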